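/- arXiv:2002.03293 — 9 statements merged into one kernel-verified Lean document; each statement's English description precedes it below -/
import Mathlib

section
/- For each fixed v ∈ ℝⁿ, the function u ↦ h(u, v) attains its minimum over ℝⁿ at the unique point u given coordinatewise by uᵢ = (ητ/(η+τ))·(log aᵢ − log(Σⱼ exp((vⱼ − Cᵢⱼ)/η))); equivalently, u minimizes h(·, v) if and only if exp(uᵢ/η)·Σⱼ exp((vⱼ − Cᵢⱼ)/η) = exp(−uᵢ/τ)·aᵢ for every i. -/
/-!
For fixed `v` the objective separates into a constant plus a sum over `i` of the one-variable
functions `φᵢ t = η Sᵢ exp(t/η) + τ aᵢ exp(-t/τ)`, where `Sᵢ = Σⱼ exp((vⱼ - Cᵢⱼ)/η)`.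
The balance condition `exp(t/η) Sᵢ = exp(-t/τ) aᵢ` says `φᵢ' t = 0`, and the tangent lines of
`exp` at that point show that it is the strict global minimum of `φᵢ`. Taking logarithms turns
the balance condition into a linear equation in `t`, solved by `t = ητ/(η+τ) (log aᵢ - log Sᵢ)`.
-/

/-- The dual entropic regularized UOT objective. -/
noncomputable def dualUOT {n : ℕ} (a b : Fin n → ℝ) (C : Fin n → Fin n → ℝ)
    (τ η : ℝ) (u v : Fin n → ℝ) : ℝ :=
  η * ∑ i, ∑ j, Real.exp ((u i + v j - C i j) / η)
    + τ * ∑ i, a i * Real.exp (-(u i) / τ)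
    + τ * ∑ j, b j * Real.exp (-(v j) / τ)

open Real Finset

lemma exp_mul_sub_lt_exp_sub_exp {x y : ℝ} (h : x ≠ y) : exp y * (x - y) < exp x - exp y := by
  have := mul_lt_mul_of_pos_left (add_one_lt_exp (sub_ne_zero.mpr h)) (exp_pos y)
  rw [← exp_add, add_sub_cancel] at this
  linarith

lemma lt_of_exp_balance {S a η τ t₀ t : ℝ} (hS : 0 < S) (ha : 0 < a) (hη : 0 < η) (hτ : 0 < τ)
    (hbal : exp (t₀ / η) * S = exp (-t₀ / τ) * a) (ht : t ≠ t₀) :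
    η * S * exp (t₀ / η) + τ * a * exp (-t₀ / τ)
      < η * S * exp (t / η) + τ * a * exp (-t / τ) := by
  have hne_up : t / η ≠ t₀ / η := by contrapose! ht; field_simp at ht; exact ht
  have hne_down : -t / τ ≠ -t₀ / τ := by contrapose! ht; field_simp at ht; linarith
  have hup : exp (t₀ / η) * S * (t - t₀) < η * S * (exp (t / η) - exp (t₀ / η)) := by
    have := mul_lt_mul_of_pos_left (exp_mul_sub_lt_exp_sub_exp hne_up) (mul_pos hη hS)
    have hlin : η * S * (exp (t₀ / η) * (t / η - t₀ / η)) = exp (t₀ / η) * S * (t - t₀) := by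
      field_simp
    rwa [hlin] at this
  have hdown : exp (-t₀ / τ) * a * (t₀ - t) < τ * a * (exp (-t / τ) - exp (-t₀ / τ)) := by
    have := mul_lt_mul_of_pos_left (exp_mul_sub_lt_exp_sub_exp hne_down) (mul_pos hτ ha)
    have hlin : τ * a * (exp (-t₀ / τ) * (-t / τ - -t₀ / τ)) = exp (-t₀ / τ) * a * (t₀ - t) := by
      field_simp
      ring
    rwa [hlin] at this
  have hcancel : exp (t₀ / η) * S * (t - t₀) + exp (-t₀ / τ) * a * (t₀ - t) = 0 := by
    rw [hbal]; ring
  linarith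

lemma exp_balance_iff {S a η τ t : ℝ} (hS : 0 < S) (ha : 0 < a) (hη : 0 < η) (hτ : 0 < τ) :
    exp (t / η) * S = exp (-t / τ) * a ↔ t = η * τ / (η + τ) * (log a - log S) := by
  rw [← exp_log hS, ← exp_log ha, ← exp_add, ← exp_add, exp_injective.eq_iff, log_exp, log_exp]
  have : η + τ ≠ 0 := by positivity
  constructor <;> intro h
  · field_simp at h ⊢
    linear_combination h
  · subst h
    field_simp
    ring

lemma sum_lt_sum_of_isStrictMin {ι α : Type*} [Fintype ι] {f : ι → α → ℝ} {x₀ x : ι → α}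
    (hmin : ∀ i t, t ≠ x₀ i → f i (x₀ i) < f i t) (hx : x ≠ x₀) :
    ∑ i, f i (x₀ i) < ∑ i, f i (x i) := by
  obtain ⟨i, hi⟩ := Function.ne_iff.mp hx
  refine sum_lt_sum (fun j _ => ?_) ⟨i, mem_univ i, hmin i _ hi⟩
  by_cases hj : x j = x₀ j
  · rw [hj]
  · exact (hmin j _ hj).le

lemma dualUOT_eq_sum {n : ℕ} (a b : Fin n → ℝ) (C : Fin n → Fin n → ℝ) (τ η : ℝ)
    (u v : Fin n → ℝ) :
    dualUOT a b C τ η u v =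
      ∑ i, (η * (∑ j, exp ((v j - C i j) / η)) * exp (u i / η) + τ * a i * exp (-u i / τ))
        + τ * ∑ j, b j * exp (-v j / τ) := by
  have hsplit : ∀ i j, exp ((u i + v j - C i j) / η) = exp ((v j - C i j) / η) * exp (u i / η) :=
    fun i j => by rw [← exp_add]; ring_nf
  simp only [dualUOT, hsplit, ← sum_mul, sum_add_distrib, mul_assoc, ← mul_sum]

theorem stmt_1_general {n : ℕ} (a b : Fin n → ℝ)
    (ha : ∀ i, 0 < a i)
    (C : Fin n → Fin n → ℝ)
    (τ η : ℝ) (hτ : 0 < τ) (hη : 0 < η) (v : Fin n → ℝ) :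
    (∀ u : Fin n → ℝ,
      dualUOT a b C τ η
        (fun i => (η * τ / (η + τ)) *
          (Real.log (a i) - Real.log (∑ j, Real.exp ((v j - C i j) / η)))) v
        ≤ dualUOT a b C τ η u v) ∧
    (∀ u : Fin n → ℝ,
      (∀ u' : Fin n → ℝ, dualUOT a b C τ η u v ≤ dualUOT a b C τ η u' v) ↔
        (∀ i, Real.exp (u i / η) * (∑ j, Real.exp ((v j - C i j) / η))
          = Real.exp (-(u i) / τ) * a i)) ∧
    (∀ u : Fin n → ℝ,
      (∀ i, Real.exp (u i / η) * (∑ j, Real.exp ((v j - C i j) / η))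
          = Real.exp (-(u i) / τ) * a i) →
        u = fun i => (η * τ / (η + τ)) *
          (Real.log (a i) - Real.log (∑ j, Real.exp ((v j - C i j) / η)))) := by
  set S : Fin n → ℝ := fun i => ∑ j, exp ((v j - C i j) / η)
  set u₀ : Fin n → ℝ := fun i => η * τ / (η + τ) * (log (a i) - log (S i))
  have hS : ∀ i, 0 < S i := fun i => sum_pos (fun j _ => exp_pos _) ⟨i, mem_univ i⟩
  have hbal_iff : ∀ u : Fin n → ℝ,
      (∀ i, exp (u i / η) * S i = exp (-u i / τ) * a i) ↔ u = u₀ := fun u =>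
    (forall_congr' fun i => exp_balance_iff (hS i) (ha i) hη hτ).trans funext_iff.symm
  have hstrict : ∀ u, u ≠ u₀ → dualUOT a b C τ η u₀ v < dualUOT a b C τ η u v := fun u hu => by
    rw [dualUOT_eq_sum, dualUOT_eq_sum, add_lt_add_iff_right]
    exact sum_lt_sum_of_isStrictMin (f := fun i t => η * S i * exp (t / η) + τ * a i * exp (-t / τ))
      (fun i t ht => lt_of_exp_balance (hS i) (ha i) hη hτ
        ((exp_balance_iff (hS i) (ha i) hη hτ).mpr rfl) ht) hu
  have hmin : ∀ u, dualUOT a b C τ η u₀ v ≤ dualUOT a b C τ η u v := fun u => by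
    rcases eq_or_ne u u₀ with rfl | hu
    exacts [le_rfl, (hstrict u hu).le]
  refine ⟨hmin, fun u => ?_, fun u hu => (hbal_iff u).mp hu⟩
  rw [hbal_iff]
  exact ⟨fun h => by_contra fun hu => (hstrict u hu).not_ge (h u₀), fun h => h ▸ hmin⟩

/-- For fixed `v`, `u ↦ h(u,v)` attains its minimum at the unique point
`uᵢ = (ητ/(η+τ))·(log aᵢ − log Σⱼ exp((vⱼ − Cᵢⱼ)/η))`; equivalently, `u` minimizes
`h(·,v)` iff `exp(uᵢ/η)·Σⱼ exp((vⱼ − Cᵢⱼ)/η) = exp(−uᵢ/τ)·aᵢ` for every `i`. -/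
theorem stmt_1 {n : ℕ} (hn : 2 ≤ n) (a b : Fin n → ℝ)
    (ha : ∀ i, 0 < a i) (hb : ∀ j, 0 < b j)
    (C : Fin n → Fin n → ℝ) (hC : ∀ i j, 0 ≤ C i j)
    (τ η : ℝ) (hτ : 0 < τ) (hη : 0 < η) (v : Fin n → ℝ) :
    (∀ u : Fin n → ℝ,
      dualUOT a b C τ η
        (fun i => (η * τ / (η + τ)) *
          (Real.log (a i) - Real.log (∑ j, Real.exp ((v j - C i j) / η)))) v
        ≤ dualUOT a b C τ η u v) ∧
    (∀ u : Fin n → ℝ,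
      (∀ u' : Fin n → ℝ, dualUOT a b C τ η u v ≤ dualUOT a b C τ η u' v) ↔
        (∀ i, Real.exp (u i / η) * (∑ j, Real.exp ((v j - C i j) / η))
          = Real.exp (-(u i) / τ) * a i)) ∧
    (∀ u : Fin n → ℝ,
      (∀ i, Real.exp (u i / η) * (∑ j, Real.exp ((v j - C i j) / η))
          = Real.exp (-(u i) / τ) * a i) →
        u = fun i => (η * τ / (η + τ)) *
          (Real.log (a i) - Real.log (∑ j, Real.exp ((v j - C i j) / η)))) :=
  stmt_1_general a b ha C τ η hτ hη v
end

section
/- If (u*, v*) minimizes h over ℝⁿ × ℝⁿ, then u*/τ = log a − log a(u*,v*) and v*/τ = log b − log b(u*,v*), where the logarithms are taken componentwise. -/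
/-!
A minimizer is a critical point, and `h` depends on the single coordinate `uᵢ = t` through
`η e^{t/η} ∑ⱼ e^{(vⱼ - Cᵢⱼ)/η} + τ aᵢ e^{-t/τ}`. Its derivative vanishes exactly when
`aᵢ e^{-uᵢ/τ} = a(u,v)ᵢ`, and taking logarithms gives the formula for `uᵢ`. The formula for `v`
is the same statement for the transposed problem, since `h` is symmetric under
`(a, b, C, u, v) ↦ (b, a, Cᵀ, v, u)`.
-/

open Real

theorem dualUOT_swap {n : ℕ} (a b : Fin n → ℝ) (C : Fin n → Fin n → ℝ) (τ η : ℝ)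
    (u v : Fin n → ℝ) :
    dualUOT a b C τ η u v = dualUOT b a (fun i j => C j i) τ η v u := by
  unfold dualUOT
  rw [Finset.sum_comm]
  simp only [add_comm (v _) (u _)]
  ring

theorem Fintype.sum_apply_update_eq_add_sum_compl {ι α M : Type*} [Fintype ι] [DecidableEq ι]
    [AddCommMonoid M] (g : ι → α → M) (u : ι → α) (i : ι) (t : α) :
    ∑ k, g k (Function.update u i t k) = g i t + ∑ k ∈ {i}ᶜ, g k (u k) := by
  rw [Fintype.sum_eq_add_sum_compl i, Function.update_self]
  congr 1
  exact Finset.sum_congr rfl fun k hk => by rw [Function.update_of_ne (by simpa using hk)]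

theorem exists_dualUOT_update_left {n : ℕ} (a b : Fin n → ℝ) (C : Fin n → Fin n → ℝ)
    (τ η : ℝ) (u v : Fin n → ℝ) (i : Fin n) :
    ∃ R : ℝ, ∀ t : ℝ, dualUOT a b C τ η (Function.update u i t) v
      = η * ∑ j, exp ((t + v j - C i j) / η) + τ * (a i * exp (-t / τ)) + R := by
  refine ⟨η * ∑ k ∈ {i}ᶜ, ∑ j, exp ((u k + v j - C k j) / η)
    + τ * ∑ k ∈ {i}ᶜ, a k * exp (-(u k) / τ) + τ * ∑ j, b j * exp (-(v j) / τ), fun t => ?_⟩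
  rw [dualUOT,
    Fintype.sum_apply_update_eq_add_sum_compl (fun k x => ∑ j, exp ((x + v j - C k j) / η)),
    Fintype.sum_apply_update_eq_add_sum_compl (fun k x => a k * exp (-x / τ))]
  ring

theorem mul_exp_neg_div_eq_sum_exp_of_isLocalMin {ι : Type*} [Fintype ι] {η τ : ℝ}
    (hη : η ≠ 0) (hτ : τ ≠ 0) (w : ι → ℝ) (q K x : ℝ)
    (hx : IsLocalMin (fun t => η * ∑ j, exp ((t + w j) / η) + τ * (q * exp (-t / τ)) + K) x) :
    q * exp (-x / τ) = ∑ j, exp ((x + w j) / η) := by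
  have hderiv : HasDerivAt
      (fun t => η * ∑ j, exp ((t + w j) / η) + τ * (q * exp (-t / τ)) + K)
      (η * ∑ j, exp ((x + w j) / η) * (1 / η) + τ * (q * (exp (-x / τ) * (-1 / τ)))) x := by
    have hexp (j : ι) :
        HasDerivAt (fun t => exp ((t + w j) / η)) (exp ((x + w j) / η) * (1 / η)) x :=
      (((hasDerivAt_id x).add_const (w j)).div_const η).exp
    have hneg : HasDerivAt (fun t => exp (-t / τ)) (exp (-x / τ) * (-1 / τ)) x :=
      ((hasDerivAt_id x).neg.div_const τ).exp
    exact (((HasDerivAt.fun_sum fun j _ => hexp j).const_mul η).add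
      ((hneg.const_mul q).const_mul τ)).add_const K
  have hzero := hx.hasDerivAt_eq_zero hderiv
  rw [← Finset.sum_mul] at hzero
  field_simp at hzero
  rw [neg_div]
  linarith

theorem div_eq_log_sub_log_of_mul_exp_neg_div_eq {q S x τ : ℝ} (hq : q ≠ 0)
    (h : q * exp (-x / τ) = S) : x / τ = log q - log S := by
  rw [← h, log_mul hq (exp_ne_zero _), log_exp, neg_div]
  ring

theorem div_eq_log_sub_log_rowSum_of_isMinimizer_dualUOT {n : ℕ} {a : Fin n → ℝ}
    (ha : ∀ i, a i ≠ 0) (b : Fin n → ℝ) (C : Fin n → Fin n → ℝ) {τ η : ℝ} (hτ : τ ≠ 0)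
    (hη : η ≠ 0) {u v : Fin n → ℝ}
    (hmin : ∀ u', dualUOT a b C τ η u v ≤ dualUOT a b C τ η u' v)
    (i : Fin n) :
    u i / τ = log (a i) - log (∑ j, exp ((u i + v j - C i j) / η)) := by
  obtain ⟨R, hR⟩ := exists_dualUOT_update_left a b C τ η u v i
  have hlocal : IsLocalMin
      (fun t => η * ∑ j, exp ((t + v j - C i j) / η) + τ * (a i * exp (-t / τ)) + R) (u i) :=
    Filter.Eventually.of_forall fun t => by
      simpa only [← hR, Function.update_eq_self] using hmin (Function.update u i t)
  have hbalance := mul_exp_neg_div_eq_sum_exp_of_isLocalMin hη hτ (fun j => v j - C i j) (a i) R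
    (u i) (by simpa only [add_sub_assoc] using hlocal)
  simp only [← add_sub_assoc] at hbalance
  exact div_eq_log_sub_log_of_mul_exp_neg_div_eq (ha i) hbalance

theorem stmt_2_general {n : ℕ} (a b : Fin n → ℝ)
    (ha : ∀ i, 0 < a i) (hb : ∀ j, 0 < b j)
    (C : Fin n → Fin n → ℝ)
    (τ η : ℝ) (hτ : 0 < τ) (hη : 0 < η)
    (ustar vstar : Fin n → ℝ)
    (hmin : ∀ u v : Fin n → ℝ, dualUOT a b C τ η ustar vstar ≤ dualUOT a b C τ η u v) :
    (∀ i, ustar i / τ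
        = Real.log (a i)
          - Real.log (∑ j, Real.exp ((ustar i + vstar j - C i j) / η))) ∧
    (∀ j, vstar j / τ
        = Real.log (b j)
          - Real.log (∑ i, Real.exp ((ustar i + vstar j - C i j) / η))) := by
  refine ⟨div_eq_log_sub_log_rowSum_of_isMinimizer_dualUOT (fun i => (ha i).ne') b C hτ.ne'
      hη.ne' fun u => hmin u vstar, fun j => ?_⟩
  have hswap := div_eq_log_sub_log_rowSum_of_isMinimizer_dualUOT (fun j => (hb j).ne') a
    (fun j i => C i j) hτ.ne' hη.ne' (u := vstar) (v := ustar)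
    (fun v => by simpa only [← dualUOT_swap] using hmin ustar v) j
  simpa only [add_comm (vstar j)] using hswap

/-- If `(u*, v*)` minimizes `h`, then `u*/τ = log a − log a(u*,v*)` and
`v*/τ = log b − log b(u*,v*)` componentwise, where `a(u,v)` and `b(u,v)` are the
row and column sums of `B(u,v)ᵢⱼ = exp((uᵢ + vⱼ − Cᵢⱼ)/η)`. -/
theorem stmt_2 {n : ℕ} (hn : 2 ≤ n) (a b : Fin n → ℝ)
    (ha : ∀ i, 0 < a i) (hb : ∀ j, 0 < b j)
    (C : Fin n → Fin n → ℝ) (hC : ∀ i j, 0 ≤ C i j)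
    (τ η : ℝ) (hτ : 0 < τ) (hη : 0 < η)
    (ustar vstar : Fin n → ℝ)
    (hmin : ∀ u v : Fin n → ℝ, dualUOT a b C τ η ustar vstar ≤ dualUOT a b C τ η u v) :
    (∀ i, ustar i / τ
        = Real.log (a i)
          - Real.log (∑ j, Real.exp ((ustar i + vstar j - C i j) / η))) ∧
    (∀ j, vstar j / τ
        = Real.log (b j)
          - Real.log (∑ i, Real.exp ((ustar i + vstar j - C i j) / η))) :=
  stmt_2_general a b ha hb C τ η hτ hη ustar vstar hmin
end

section
/- For any vectors u, v, u′, v′ ∈ ℝⁿ, the following hold for every index i and j: (a) |log(a(u′,v′)ᵢ / a(u,v)ᵢ) − (u′ᵢ − uᵢ)/η| ≤ max_{1≤j≤n} |v′ⱼ − vⱼ|/η, and (b) |log(b(u′,v′)ⱼ / b(u,v)ⱼ) − (v′ⱼ − vⱼ)/η| ≤ max_{1≤i≤n} |u′ᵢ − uᵢ|/η. -/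
/-! Shifting `u` by `u' - u` multiplies every term of the `i`-th row sum by the common factor
`exp ((u'ᵢ - uᵢ)/η)`, while shifting `v` by `v' - v` multiplies each term by a factor lying within
`exp (± ‖v' - v‖/η)`. Hence the log of the ratio of row sums is `(u'ᵢ - uᵢ)/η` up to `‖v' - v‖/η`;
columns are symmetric. -/

open Finset Real

section LogSumExp

variable {ι : Type*} [Fintype ι] [Nonempty ι]

theorem abs_log_sum_exp_div_sub_le {f g : ι → ℝ} {c M : ℝ} (h : ∀ j, |g j - f j - c| ≤ M) :
    |log ((∑ j, exp (g j)) / ∑ j, exp (f j)) - c| ≤ M := by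
  have hS : 0 < ∑ j, exp (f j) := sum_pos (fun j _ => exp_pos _) univ_nonempty
  have hr : 0 < (∑ j, exp (g j)) / ∑ j, exp (f j) :=
    div_pos (sum_pos (fun j _ => exp_pos _) univ_nonempty) hS
  have upper : ∑ j, exp (g j) ≤ exp (c + M) * ∑ j, exp (f j) := by
    rw [mul_sum]
    refine sum_le_sum fun j _ => ?_
    rw [← exp_add]
    exact exp_le_exp.2 (by linarith [(abs_le.1 (h j)).2])
  have lower : exp (c - M) * ∑ j, exp (f j) ≤ ∑ j, exp (g j) := by
    rw [mul_sum]
    refine sum_le_sum fun j _ => ?_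
    rw [← exp_add]
    exact exp_le_exp.2 (by linarith [(abs_le.1 (h j)).1])
  have hlog_le := (log_le_iff_le_exp hr).2 ((div_le_iff₀ hS).2 upper)
  have hle_log := (le_log_iff_exp_le hr).2 ((le_div_iff₀ hS).2 lower)
  rw [abs_le]
  constructor <;> linarith

end LogSumExp

theorem abs_sub_div_le_norm_sub_div {ι : Type*} [Fintype ι] {x y : ι → ℝ} {η : ℝ} (hη : 0 < η)
    (j : ι) : |(x j - y j) / η| ≤ ‖x - y‖ / η := by
  rw [abs_div, abs_of_pos hη]
  gcongr
  simpa using norm_le_pi_norm (x - y) j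

theorem stmt_3_general {n : ℕ} (hn : 2 ≤ n)
    (C : Fin n → Fin n → ℝ)
    (η : ℝ) (hη : 0 < η) (u v u' v' : Fin n → ℝ) :
    (∀ i, |Real.log ((∑ j, Real.exp ((u' i + v' j - C i j) / η))
          / (∑ j, Real.exp ((u i + v j - C i j) / η)))
        - (u' i - u i) / η| ≤ ‖v' - v‖ / η) ∧
    (∀ j, |Real.log ((∑ i, Real.exp ((u' i + v' j - C i j) / η))
          / (∑ i, Real.exp ((u i + v j - C i j) / η)))
        - (v' j - v j) / η| ≤ ‖u' - u‖ / η) := by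
  have : Nonempty (Fin n) := ⟨⟨0, by omega⟩⟩
  constructor
  · intro i
    refine abs_log_sum_exp_div_sub_le fun j => ?_
    convert abs_sub_div_le_norm_sub_div hη (x := v') (y := v) j using 2
    ring
  · intro j
    refine abs_log_sum_exp_div_sub_le fun i => ?_
    convert abs_sub_div_le_norm_sub_div hη (x := u') (y := u) i using 2
    ring

/-- For any `u, v, u', v' ∈ ℝⁿ` and all indices `i, j`:
(a) `|log(a(u',v')ᵢ / a(u,v)ᵢ) − (u'ᵢ − uᵢ)/η| ≤ ‖v' − v‖∞/η`, and
(b) `|log(b(u',v')ⱼ / b(u,v)ⱼ) − (v'ⱼ − vⱼ)/η| ≤ ‖u' − u‖∞/η`,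
where `a(u,v)` and `b(u,v)` are the row and column sums of
`B(u,v)ᵢⱼ = exp((uᵢ + vⱼ − Cᵢⱼ)/η)`, and `‖·‖` is the sup norm on `Fin n → ℝ`. -/
theorem stmt_3 {n : ℕ} (hn : 2 ≤ n)
    (C : Fin n → Fin n → ℝ) (hC : ∀ i j, 0 ≤ C i j)
    (η : ℝ) (hη : 0 < η) (u v u' v' : Fin n → ℝ) :
    (∀ i, |Real.log ((∑ j, Real.exp ((u' i + v' j - C i j) / η))
          / (∑ j, Real.exp ((u i + v j - C i j) / η)))
        - (u' i - u i) / η| ≤ ‖v' - v‖ / η) ∧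
    (∀ j, |Real.log ((∑ i, Real.exp ((u' i + v' j - C i j) / η))
          / (∑ i, Real.exp ((u i + v j - C i j) / η)))
        - (v' j - v j) / η| ≤ ‖u' - u‖ / η) :=
  stmt_3_general hn C η hη u v u' v'
end

section
/- For any X ∈ ℝ^{n×n} with nonnegative entries and any t > 0, g(tX) = t·g(X) + τ·(1−t)·(α+β) + (2τ+η)·x·t·log t, where x = Σ_{i,j} Xᵢⱼ. -/
/-- Generalized KL divergence, with the convention `0 · log 0 = 0`. -/
noncomputable def KL {n : ℕ} (x y : Fin n → ℝ) : ℝ :=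
  ∑ i, (x i * Real.log (x i / y i) - x i + y i)

/-- Entropy of a nonnegative matrix, with the convention `0 · log 0 = 0`. -/
noncomputable def entH {n : ℕ} (X : Fin n → Fin n → ℝ) : ℝ :=
  -∑ i, ∑ j, X i j * (Real.log (X i j) - 1)

/-- The entropic regularized UOT objective. -/
noncomputable def entUOT {n : ℕ} (a b : Fin n → ℝ) (C : Fin n → Fin n → ℝ)
    (τ η : ℝ) (X : Fin n → Fin n → ℝ) : ℝ :=
  (∑ i, ∑ j, C i j * X i j) - η * entH X
    + τ * KL (fun i => ∑ j, X i j) a + τ * KL (fun j => ∑ i, X i j) b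

lemma aux1 (t x : ℝ) (ht : 0 < t) (hx : 0 ≤ x) :
    t * x * Real.log (t * x) = t * (x * Real.log x) + t * x * Real.log t := by
  rcases hx.eq_or_lt with h | h
  · simp [← h]
  · rw [Real.log_mul ht.ne' h.ne']; ring

lemma aux2 (t x y : ℝ) (ht : 0 < t) (hx : 0 ≤ x) (hy : 0 < y) :
    t * x * Real.log (t * x / y) = t * (x * Real.log (x / y)) + t * x * Real.log t := by
  rcases hx.eq_or_lt with h | h
  · simp [← h]
  · rw [Real.log_div (mul_pos ht h).ne' hy.ne', Real.log_div h.ne' hy.ne',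
      Real.log_mul ht.ne' h.ne']; ring

lemma auxKL {n : ℕ} (t : ℝ) (ht : 0 < t) (r y : Fin n → ℝ)
    (hr : ∀ i, 0 ≤ r i) (hy : ∀ i, 0 < y i) :
    KL (fun i => t * r i) y
      = t * KL r y + (1 - t) * (∑ i, y i) + t * (∑ i, r i) * Real.log t := by
  unfold KL
  have key : ∀ i : Fin n, t * r i * Real.log (t * r i / y i) - t * r i + y i
      = t * (r i * Real.log (r i / y i) - r i + y i) + (1 - t) * y i
        + t * r i * Real.log t := by
    intro i
    have h := aux2 t (r i) (y i) ht (hr i) (hy i)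
    nlinarith [h]
  calc ∑ i, (t * r i * Real.log (t * r i / y i) - t * r i + y i)
      = ∑ i, (t * (r i * Real.log (r i / y i) - r i + y i) + (1 - t) * y i
          + t * r i * Real.log t) := Finset.sum_congr rfl fun i _ => key i
    _ = t * (∑ i, (r i * Real.log (r i / y i) - r i + y i))
          + (1 - t) * (∑ i, y i) + t * (∑ i, r i) * Real.log t := by
        simp [Finset.sum_add_distrib, Finset.sum_sub_distrib, Finset.mul_sum, Finset.sum_mul, mul_assoc, mul_sub, mul_add]

/-- Scaling identity:
`g(tX) = t·g(X) + τ·(1−t)·(α+β) + (2τ+η)·x·t·log t` for `t > 0`. -/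
theorem stmt_7 {n : ℕ} (hn : 2 ≤ n) (a b : Fin n → ℝ)
    (ha : ∀ i, 0 < a i) (hb : ∀ j, 0 < b j)
    (C : Fin n → Fin n → ℝ) (hC : ∀ i j, 0 ≤ C i j)
    (τ η : ℝ) (hτ : 0 < τ) (hη : 0 < η)
    (X : Fin n → Fin n → ℝ) (hX : ∀ i j, 0 ≤ X i j)
    (t : ℝ) (ht : 0 < t) :
    entUOT a b C τ η (fun i j => t * X i j)
      = t * entUOT a b C τ η X
        + τ * (1 - t) * ((∑ i, a i) + (∑ j, b j))
        + (2 * τ + η) * (∑ i, ∑ j, X i j) * t * Real.log t := by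
  have hrow : ∀ i, (∑ j, t * X i j) = t * ∑ j, X i j := fun i => (Finset.mul_sum _ _ _).symm
  have hcol : ∀ j, (∑ i, t * X i j) = t * ∑ i, X i j := fun j => (Finset.mul_sum _ _ _).symm
  have hCsum : ∑ i, ∑ j, C i j * (t * X i j) = t * ∑ i, ∑ j, C i j * X i j := by
    rw [Finset.mul_sum]
    refine Finset.sum_congr rfl fun i _ => ?_
    rw [Finset.mul_sum]
    exact Finset.sum_congr rfl fun j _ => by ring
  have hH : entH (fun i j => t * X i j)
      = t * entH X - t * (∑ i, ∑ j, X i j) * Real.log t := by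
    unfold entH
    have key : ∀ i j, t * X i j * (Real.log (t * X i j) - 1)
        = t * (X i j * (Real.log (X i j) - 1)) + t * X i j * Real.log t := by
      intro i j
      have h := aux1 t (X i j) ht (hX i j)
      nlinarith [h]
    have : ∑ i, ∑ j, t * X i j * (Real.log (t * X i j) - 1)
        = ∑ i, ∑ j, (t * (X i j * (Real.log (X i j) - 1)) + t * X i j * Real.log t) :=
      Finset.sum_congr rfl fun i _ => Finset.sum_congr rfl fun j _ => key i j
    rw [this]
    simp [Finset.sum_add_distrib, Finset.mul_sum, Finset.sum_mul, mul_assoc]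
    ring
  have hKLr : KL (fun i => ∑ j, t * X i j) a
      = t * KL (fun i => ∑ j, X i j) a + (1 - t) * (∑ i, a i)
        + t * (∑ i, ∑ j, X i j) * Real.log t := by
    have := auxKL t ht (fun i => ∑ j, X i j) a
      (fun i => Finset.sum_nonneg fun j _ => hX i j) ha
    simpa [hrow] using this
  have hKLc : KL (fun j => ∑ i, t * X i j) b
      = t * KL (fun j => ∑ i, X i j) b + (1 - t) * (∑ j, b j)
        + t * (∑ j, ∑ i, X i j) * Real.log t := by
    have := auxKL t ht (fun j => ∑ i, X i j) b
      (fun j => Finset.sum_nonneg fun i _ => hX i j) hb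
    simpa [hcol] using this
  have hcomm : (∑ j, ∑ i, X i j) = ∑ i, ∑ j, X i j := Finset.sum_comm
  unfold entUOT
  rw [hCsum, hH, hKLr, hKLc, hcomm]
  ring
end

section
/- If X* minimizes g over the set of n×n matrices with nonnegative entries, then g(X*) + (2τ+η)·x* = τ·(α+β), where x* = Σ_{i,j} X*ᵢⱼ. -/
/-!
Along the ray `t ↦ t • X` the objective is explicit:
`g(t X) = t g(X) + (η + 2τ) x t log t + τ (1 - t)(α + β)`,
because every logarithm in `g` splits off a `log t`. A minimizer `X*` makes `t = 1` a local
minimum of this function of `t`, so its derivative `g(X*) + (η + 2τ) x* - τ (α + β)` vanishes.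
-/

open Finset Real

lemma mul_log_mul_sub_one {t : ℝ} (ht : t ≠ 0) (x : ℝ) :
    t * x * (log (t * x) - 1) = t * (x * (log x - 1)) + x * (t * log t) := by
  rcases eq_or_ne x 0 with rfl | hx
  · simp
  · rw [log_mul ht hx]; ring

lemma mul_log_mul_div_sub_add {t : ℝ} (ht : t ≠ 0) (x : ℝ) {y : ℝ} (hy : y ≠ 0) :
    t * x * log (t * x / y) - t * x + y
      = t * (x * log (x / y) - x + y) + x * (t * log t) + (1 - t) * y := by
  rcases eq_or_ne x 0 with rfl | hx
  · simp only [mul_zero, zero_div, log_zero, sub_self, zero_add, zero_mul, add_zero]; ring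
  · rw [mul_div_assoc, log_mul ht (div_ne_zero hx hy)]; ring

lemma KL_smul {n : ℕ} (x : Fin n → ℝ) {y : Fin n → ℝ} (hy : ∀ i, y i ≠ 0) {t : ℝ} (ht : t ≠ 0) :
    KL (t • x) y = t * KL x y + (∑ i, x i) * (t * log t) + (1 - t) * ∑ i, y i := by
  simp only [KL, Pi.smul_apply, smul_eq_mul, mul_log_mul_div_sub_add ht _ (hy _),
    sum_add_distrib, ← mul_sum, ← sum_mul]

lemma entH_smul {n : ℕ} (X : Fin n → Fin n → ℝ) {t : ℝ} (ht : t ≠ 0) :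
    entH (t • X) = t * entH X - (∑ i, ∑ j, X i j) * (t * log t) := by
  simp only [entH, Pi.smul_apply, smul_eq_mul, mul_log_mul_sub_one ht, sum_add_distrib,
    ← mul_sum, ← sum_mul]
  ring

lemma entUOT_smul {n : ℕ} {a b : Fin n → ℝ} (ha : ∀ i, a i ≠ 0) (hb : ∀ j, b j ≠ 0)
    (C : Fin n → Fin n → ℝ) (τ η : ℝ) (X : Fin n → Fin n → ℝ) {t : ℝ} (ht : t ≠ 0) :
    entUOT a b C τ η (t • X)
      = t * entUOT a b C τ η X + (η + 2 * τ) * (∑ i, ∑ j, X i j) * (t * log t)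
        + τ * (1 - t) * ((∑ i, a i) + ∑ j, b j) := by
  have hrow : (fun i => ∑ j, (t • X) i j) = t • fun i => ∑ j, X i j := by
    ext i; simp [mul_sum]
  have hcol : (fun j => ∑ i, (t • X) i j) = t • fun j => ∑ i, X i j := by
    ext j; simp [mul_sum]
  have hcost : ∑ i, ∑ j, C i j * (t • X) i j = t * ∑ i, ∑ j, C i j * X i j := by
    simp only [Pi.smul_apply, smul_eq_mul, mul_sum, mul_left_comm]
  rw [entUOT, hrow, hcol, hcost, KL_smul _ ha ht, KL_smul _ hb ht, entH_smul X ht,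
    sum_comm (f := fun j i => X i j), entUOT]
  ring

lemma hasDerivAt_entUOT_smul {n : ℕ} {a b : Fin n → ℝ} (ha : ∀ i, a i ≠ 0)
    (hb : ∀ j, b j ≠ 0) (C : Fin n → Fin n → ℝ) (τ η : ℝ) (X : Fin n → Fin n → ℝ) :
    HasDerivAt (fun t : ℝ => entUOT a b C τ η (t • X))
      (entUOT a b C τ η X + (η + 2 * τ) * (∑ i, ∑ j, X i j)
        - τ * ((∑ i, a i) + ∑ j, b j)) 1 := by
  set G := entUOT a b C τ η X
  set K := (η + 2 * τ) * ∑ i, ∑ j, X i j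
  set S := (∑ i, a i) + ∑ j, b j
  have hlin : HasDerivAt (fun t : ℝ => t * G) G 1 := by
    simpa using hasDerivAt_mul_const G
  have hentropy : HasDerivAt (fun t : ℝ => K * (t * log t)) K 1 := by
    simpa using (hasDerivAt_mul_log one_ne_zero).const_mul K
  have hmass : HasDerivAt (fun t : ℝ => τ * (1 - t) * S) (-(τ * S)) 1 := by
    simpa using ((hasDerivAt_id (1 : ℝ)).const_sub 1).const_mul τ |>.mul_const S
  have hformula := (hlin.add hentropy).add hmass
  rw [← sub_eq_add_neg] at hformula
  refine hformula.congr_of_eventuallyEq ?_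
  filter_upwards [eventually_ne_nhds one_ne_zero] with t ht
  exact entUOT_smul ha hb C τ η X ht

theorem stmt_9_general {n : ℕ} (a b : Fin n → ℝ)
    (ha : ∀ i, 0 < a i) (hb : ∀ j, 0 < b j)
    (C : Fin n → Fin n → ℝ)
    (τ η : ℝ)
    (Xstar : Fin n → Fin n → ℝ) (hXstar : ∀ i j, 0 ≤ Xstar i j)
    (hmin : ∀ Y : Fin n → Fin n → ℝ, (∀ i j, 0 ≤ Y i j) →
      entUOT a b C τ η Xstar ≤ entUOT a b C τ η Y) :
    entUOT a b C τ η Xstar + (2 * τ + η) * (∑ i, ∑ j, Xstar i j)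
      = τ * ((∑ i, a i) + (∑ j, b j)) := by
  have hlocalMin : IsLocalMin (fun t : ℝ => entUOT a b C τ η (t • Xstar)) 1 := by
    filter_upwards [lt_mem_nhds one_pos] with t ht
    simpa only [one_smul] using
      hmin (t • Xstar) fun i j => mul_nonneg ht.le (hXstar i j)
  have hderiv := hlocalMin.hasDerivAt_eq_zero
    (hasDerivAt_entUOT_smul (fun i => (ha i).ne') (fun j => (hb j).ne') C τ η Xstar)
  linarith

/-- If `X*` minimizes `g` over nonnegative matrices, then
`g(X*) + (2τ+η)·x* = τ·(α+β)` where `x* = Σᵢⱼ X*ᵢⱼ`. -/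
theorem stmt_9 {n : ℕ} (hn : 2 ≤ n) (a b : Fin n → ℝ)
    (ha : ∀ i, 0 < a i) (hb : ∀ j, 0 < b j)
    (C : Fin n → Fin n → ℝ) (hC : ∀ i j, 0 ≤ C i j)
    (τ η : ℝ) (hτ : 0 < τ) (hη : 0 < η)
    (Xstar : Fin n → Fin n → ℝ) (hXstar : ∀ i j, 0 ≤ Xstar i j)
    (hmin : ∀ Y : Fin n → Fin n → ℝ, (∀ i j, 0 ≤ Y i j) →
      entUOT a b C τ η Xstar ≤ entUOT a b C τ η Y) :
    entUOT a b C τ η Xstar + (2 * τ + η) * (∑ i, ∑ j, Xstar i j)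
      = τ * ((∑ i, a i) + (∑ j, b j)) :=
  stmt_9_general a b ha hb C τ η Xstar hXstar hmin
end

section
/- If X̂ minimizes f over the set of n×n matrices with nonnegative entries, then f(X̂) + 2τ·x̂ = τ·(α+β), where x̂ = Σ_{i,j} X̂ᵢⱼ. -/
/-- The (unregularized) UOT objective. -/
noncomputable def fUOT {n : ℕ} (a b : Fin n → ℝ) (C : Fin n → Fin n → ℝ)
    (τ : ℝ) (X : Fin n → Fin n → ℝ) : ℝ :=
  (∑ i, ∑ j, C i j * X i j)
    + τ * KL (fun i => ∑ j, X i j) a + τ * KL (fun j => ∑ i, X i j) b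

open Finset Real

theorem add_eq_zero_of_isMinOn_mul_add_mul_mul_log {S K : ℝ}
    (h : IsMinOn (fun t => t * S + K * (t * log t)) (Set.Ioi 0) 1) : S + K = 0 := by
  have hderiv : HasDerivAt (fun t => t * S + K * (t * log t)) (S + K) 1 := by
    have h := ((hasDerivAt_id' (1 : ℝ)).mul_const S).add
      ((hasDerivAt_mul_log one_ne_zero).const_mul K)
    rwa [log_one, zero_add, mul_one, one_mul] at h
  exact (h.isLocalMin (Ioi_mem_nhds one_pos)).hasDerivAt_eq_zero hderiv

theorem KL_const_mul {n : ℕ} {t : ℝ} (ht : 0 < t) (x : Fin n → ℝ) {y : Fin n → ℝ}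
    (hy : ∀ i, y i ≠ 0) :
    KL (fun i => t * x i) y = t * KL x y + (∑ i, x i) * (t * log t) + (1 - t) * ∑ i, y i := by
  unfold KL
  rw [mul_sum, sum_mul, mul_sum, ← sum_add_distrib, ← sum_add_distrib]
  refine sum_congr rfl fun i _ => ?_
  rcases eq_or_ne (x i) 0 with hx | hx
  · simp only [hx, mul_zero, zero_mul, zero_div, log_zero]
    ring
  · rw [mul_div_assoc, log_mul ht.ne' (div_ne_zero hx (hy i))]
    ring

theorem fUOT_const_mul {n : ℕ} {a b : Fin n → ℝ} (ha : ∀ i, a i ≠ 0) (hb : ∀ j, b j ≠ 0)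
    (C : Fin n → Fin n → ℝ) (τ : ℝ) (X : Fin n → Fin n → ℝ) {t : ℝ} (ht : 0 < t) :
    fUOT a b C τ (fun i j => t * X i j)
      = t * fUOT a b C τ X + 2 * τ * (∑ i, ∑ j, X i j) * (t * log t)
        + (1 - t) * τ * ((∑ i, a i) + ∑ j, b j) := by
  have hrow : (fun i => ∑ j, t * X i j) = fun i => t * ∑ j, X i j := by
    simp only [mul_sum]
  have hcol : (fun j => ∑ i, t * X i j) = fun j => t * ∑ i, X i j := by
    simp only [mul_sum]
  have hcost : ∑ i, ∑ j, C i j * (t * X i j) = t * ∑ i, ∑ j, C i j * X i j := by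
    simp only [mul_sum, mul_left_comm t]
  unfold fUOT
  rw [hrow, hcol, hcost, KL_const_mul ht _ ha, KL_const_mul ht _ hb,
    sum_comm (f := fun j i => X i j)]
  ring

theorem stmt_10_general {n : ℕ} (a b : Fin n → ℝ)
    (ha : ∀ i, 0 < a i) (hb : ∀ j, 0 < b j)
    (C : Fin n → Fin n → ℝ)
    (τ : ℝ)
    (Xhat : Fin n → Fin n → ℝ) (hXhat : ∀ i j, 0 ≤ Xhat i j)
    (hmin : ∀ Y : Fin n → Fin n → ℝ, (∀ i j, 0 ≤ Y i j) →
      fUOT a b C τ Xhat ≤ fUOT a b C τ Y) :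
    fUOT a b C τ Xhat + 2 * τ * (∑ i, ∑ j, Xhat i j)
      = τ * ((∑ i, a i) + (∑ j, b j)) := by
  suffices hmin_one : IsMinOn (fun t => t * (fUOT a b C τ Xhat - τ * ((∑ i, a i) + ∑ j, b j))
      + 2 * τ * (∑ i, ∑ j, Xhat i j) * (t * log t)) (Set.Ioi 0) 1 by
    linarith [add_eq_zero_of_isMinOn_mul_add_mul_mul_log hmin_one]
  intro t (ht : 0 < t)
  have hscaled := hmin (fun i j => t * Xhat i j) fun i j => mul_nonneg ht.le (hXhat i j)
  rw [fUOT_const_mul (fun i => (ha i).ne') (fun j => (hb j).ne') C τ Xhat ht] at hscaled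
  simp only [Set.mem_ofPred_eq, log_one, mul_zero, one_mul]
  linarith

/-- If `X̂` minimizes `f` over nonnegative matrices, then
`f(X̂) + 2τ·x̂ = τ·(α+β)` where `x̂ = Σᵢⱼ X̂ᵢⱼ`. -/
theorem stmt_10 {n : ℕ} (hn : 2 ≤ n) (a b : Fin n → ℝ)
    (ha : ∀ i, 0 < a i) (hb : ∀ j, 0 < b j)
    (C : Fin n → Fin n → ℝ) (hC : ∀ i j, 0 ≤ C i j)
    (τ : ℝ) (hτ : 0 < τ)
    (Xhat : Fin n → Fin n → ℝ) (hXhat : ∀ i j, 0 ≤ Xhat i j)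
    (hmin : ∀ Y : Fin n → Fin n → ℝ, (∀ i j, 0 ≤ Y i j) →
      fUOT a b C τ Xhat ≤ fUOT a b C τ Y) :
    fUOT a b C τ Xhat + 2 * τ * (∑ i, ∑ j, Xhat i j)
      = τ * ((∑ i, a i) + (∑ j, b j)) :=
  stmt_10_general a b ha hb C τ Xhat hXhat hmin
end

section
/- If X̂ minimizes f over the set of n×n matrices with nonnegative entries and x̂ = Σ_{i,j} X̂ᵢⱼ, then x̂ ≤ (α+β)/2. -/
lemma kl_term_nonneg (x y : ℝ) (hx : 0 ≤ x) (hy : 0 < y) :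
    0 ≤ x * Real.log (x / y) - x + y := by
  rcases hx.eq_or_lt with h | h
  · simp [← h]; linarith
  · have hlog : Real.log (y / x) ≤ y / x - 1 :=
      Real.log_le_sub_one_of_pos (by positivity)
    have hneg : Real.log (y / x) = - Real.log (x / y) := by
      rw [← Real.log_inv]; congr 1; field_simp
    have h2 : x * Real.log (y / x) ≤ x * (y / x - 1) :=
      mul_le_mul_of_nonneg_left hlog h.le
    have h3 : x * (y / x - 1) = y - x := by field_simp
    rw [hneg] at h2
    nlinarith

lemma KL_nonneg {n : ℕ} (x y : Fin n → ℝ) (hx : ∀ i, 0 ≤ x i) (hy : ∀ i, 0 < y i) :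
    0 ≤ KL x y :=
  Finset.sum_nonneg fun i _ => kl_term_nonneg _ _ (hx i) (hy i)

lemma kl_term_scale (t x y : ℝ) (ht : 0 < t) (hx : 0 ≤ x) (hy : 0 < y) :
    t * x * Real.log (t * x / y) - t * x + y
      = t * (x * Real.log (x / y) - x + y) + (t * Real.log t) * x + (1 - t) * y := by
  rcases hx.eq_or_lt with h | h
  · simp [← h]; ring
  · have hl : Real.log (t * x / y) = Real.log t + Real.log (x / y) := by
      rw [mul_div_assoc, Real.log_mul ht.ne' (div_ne_zero h.ne' hy.ne')]
    rw [hl]; ring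

lemma KL_scale {n : ℕ} (t : ℝ) (ht : 0 < t) (x y : Fin n → ℝ)
    (hx : ∀ i, 0 ≤ x i) (hy : ∀ i, 0 < y i) :
    KL (fun i => t * x i) y
      = t * KL x y + (t * Real.log t) * (∑ i, x i) + (1 - t) * (∑ i, y i) := by
  unfold KL
  rw [show (∑ i, ((fun i => t * x i) i * Real.log ((fun i => t * x i) i / y i)
        - (fun i => t * x i) i + y i))
      = ∑ i, (t * (x i * Real.log (x i / y i) - x i + y i)
        + (t * Real.log t) * x i + (1 - t) * y i) from
    Finset.sum_congr rfl fun i _ => kl_term_scale t (x i) (y i) ht (hx i) (hy i)]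
  rw [Finset.sum_add_distrib, Finset.sum_add_distrib, ← Finset.mul_sum,
    ← Finset.mul_sum, ← Finset.mul_sum]

/-- If `X̂` minimizes `f` over nonnegative matrices, then `x̂ ≤ (α+β)/2`. -/
theorem stmt_12 {n : ℕ} (hn : 2 ≤ n) (a b : Fin n → ℝ)
    (ha : ∀ i, 0 < a i) (hb : ∀ j, 0 < b j)
    (C : Fin n → Fin n → ℝ) (hC : ∀ i j, 0 ≤ C i j)
    (τ : ℝ) (hτ : 0 < τ)
    (Xhat : Fin n → Fin n → ℝ) (hXhat : ∀ i j, 0 ≤ Xhat i j)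
    (hmin : ∀ Y : Fin n → Fin n → ℝ, (∀ i j, 0 ≤ Y i j) →
      fUOT a b C τ Xhat ≤ fUOT a b C τ Y) :
    (∑ i, ∑ j, Xhat i j) ≤ ((∑ i, a i) + (∑ j, b j)) / 2 := by
  haveI : NeZero n := ⟨by omega⟩
  set T := ∑ i, ∑ j, Xhat i j with hT
  set α := ∑ i, a i with hα
  set β := ∑ j, b j with hβ
  set S := ∑ i, ∑ j, C i j * Xhat i j with hS
  set r : Fin n → ℝ := fun i => ∑ j, Xhat i j with hr
  set c : Fin n → ℝ := fun j => ∑ i, Xhat i j with hc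
  have hrpos : ∀ i, 0 ≤ r i := fun i => Finset.sum_nonneg fun j _ => hXhat i j
  have hcpos : ∀ j, 0 ≤ c j := fun j => Finset.sum_nonneg fun i _ => hXhat i j
  have hrT : ∑ i, r i = T := rfl
  have hcT : ∑ j, c j = T := Finset.sum_comm ..
  have hTnn : 0 ≤ T := Finset.sum_nonneg fun i _ => hrpos i
  have hSnn : 0 ≤ S := Finset.sum_nonneg fun i _ =>
    Finset.sum_nonneg fun j _ => mul_nonneg (hC i j) (hXhat i j)
  have hKa : 0 ≤ KL r a := KL_nonneg _ _ hrpos ha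
  have hKb : 0 ≤ KL c b := KL_nonneg _ _ hcpos hb
  have hαpos : 0 < α := Finset.sum_pos (fun i _ => ha i) Finset.univ_nonempty
  have hβpos : 0 < β := Finset.sum_pos (fun j _ => hb j) Finset.univ_nonempty
  -- key inequality: for all t ∈ (0,1), T * t ≤ (α + β) / 2
  have key : ∀ t : ℝ, 0 < t → t < 1 → T * t ≤ (α + β) / 2 := by
    intro t ht0 ht1
    have hY : ∀ i j, 0 ≤ t * Xhat i j := fun i j => mul_nonneg ht0.le (hXhat i j)
    have h := hmin (fun i j => t * Xhat i j) hY
    have hfX : fUOT a b C τ Xhat = S + τ * KL r a + τ * KL c b := by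
      simp only [fUOT, hS, hr, hc]
    have hfY : fUOT a b C τ (fun i j => t * Xhat i j)
        = t * S + τ * (t * KL r a + (t * Real.log t) * T + (1 - t) * α)
          + τ * (t * KL c b + (t * Real.log t) * T + (1 - t) * β) := by
      unfold fUOT
      have e1 : (∑ i, ∑ j, C i j * (t * Xhat i j)) = t * S := by
        rw [hS, Finset.mul_sum]
        refine Finset.sum_congr rfl fun i _ => ?_
        rw [Finset.mul_sum]
        exact Finset.sum_congr rfl fun j _ => by ring
      have e2 : (fun i => ∑ j, t * Xhat i j) = fun i => t * r i := by
        funext i; rw [← Finset.mul_sum]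
      have e3 : (fun j => ∑ i, t * Xhat i j) = fun j => t * c j := by
        funext j; rw [← Finset.mul_sum]
      rw [e1, e2, e3, KL_scale t ht0 r a hrpos ha, KL_scale t ht0 c b hcpos hb,
        hrT, hcT]
    rw [hfX, hfY] at h
    -- t * log t ≤ t * (t - 1)
    have hlog : t * Real.log t ≤ t * (t - 1) :=
      mul_le_mul_of_nonneg_left (Real.log_le_sub_one_of_pos ht0) ht0.le
    have hlog' : (t * Real.log t) * T ≤ (t * (t - 1)) * T :=
      mul_le_mul_of_nonneg_right hlog hTnn
    -- combine: (1-t)(S + τ KLa + τ KLb) ≤ 2τ (t log t) T + τ(1-t)(α+β)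
    have hu : 0 < 1 - t := sub_pos.mpr ht1
    have hB : 0 ≤ (1 - t) * (S + τ * KL r a + τ * KL c b) :=
      mul_nonneg hu.le (add_nonneg (add_nonneg hSnn (mul_nonneg hτ.le hKa))
        (mul_nonneg hτ.le hKb))
    have hA : (1 - t) * (S + τ * KL r a + τ * KL c b)
        ≤ 2 * τ * ((t * Real.log t) * T) + τ * (1 - t) * (α + β) := by linarith
    have hlog2 : 2 * τ * ((t * Real.log t) * T) ≤ 2 * τ * ((t * (t - 1)) * T) :=
      mul_le_mul_of_nonneg_left hlog' (by positivity)
    have h1 : (2 * τ * (1 - t)) * (T * t) ≤ (2 * τ * (1 - t)) * ((α + β) / 2) := by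
      nlinarith [hB, hA, hlog2]
    have hpos : 0 < 2 * τ * (1 - t) := by positivity
    exact le_of_mul_le_mul_left h1 hpos
  -- conclude T ≤ (α + β) / 2
  by_contra hcon
  push_neg at hcon
  set M := (α + β) / 2 with hM
  have hMpos : 0 < M := by positivity
  have hTpos : 0 < T := lt_trans hMpos hcon
  have ht0 : 0 < (M + T) / (2 * T) := by positivity
  have ht1 : (M + T) / (2 * T) < 1 := by
    rw [div_lt_one (by positivity)]; linarith
  have := key _ ht0 ht1
  have hTt : T * ((M + T) / (2 * T)) = (M + T) / 2 := by
    field_simp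
  rw [hTt] at this
  linarith
end

section
/- Let (u, v) and (u′, v′) be two pairs of vectors in ℝⁿ with max{‖u − u′‖∞, ‖v − v′‖∞} = Δ satisfying Δ ≤ η/8. Then |x(u,v) − x(u′,v′)| ≤ (3/η)·Δ·min{x(u,v), x(u′,v′)}. -/
/-!
Shifting every `uᵢ` and every `vⱼ` by at most `Δ` changes each exponent `(uᵢ + vⱼ − Cᵢⱼ)/η` by at
most `2Δ/η`, so each of `x(u,v)` and `x(u',v')` is at most `exp (2Δ/η)` times the other.
For `2Δ/η ≤ 1/4` one has `exp (2Δ/η) − 1 ≤ 3Δ/η`, and two nonnegative numbers within a factor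
`r` of each other differ by at most `(r − 1)` times the smaller one.
-/

open Real Finset

lemma Real.exp_sub_one_le_three_halves_mul {x : ℝ} (hx₀ : 0 ≤ x) (hx : x ≤ 1 / 3) :
    exp x - 1 ≤ 3 / 2 * x := by
  have h := exp_bound_div_one_sub_of_interval hx₀ (by linarith)
  rw [le_div_iff₀ (by linarith)] at h
  nlinarith [exp_pos x]

lemma abs_sub_le_mul_min_of_le_mul {a b r K : ℝ} (ha : 0 ≤ a) (hb : 0 ≤ b)
    (hab : a ≤ r * b) (hba : b ≤ r * a) (hr : r - 1 ≤ K) :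
    |a - b| ≤ K * min a b := by
  rcases le_total a b with h | h
  · rw [abs_sub_comm, abs_of_nonneg (sub_nonneg.2 h), min_eq_left h]
    nlinarith
  · rw [abs_of_nonneg (sub_nonneg.2 h), min_eq_right h]
    nlinarith

lemma Finset.sum_exp_le_exp_mul_sum_exp {ι : Type*} (s : Finset ι) {f g : ι → ℝ} {t : ℝ}
    (h : ∀ i ∈ s, f i ≤ g i + t) :
    ∑ i ∈ s, exp (f i) ≤ exp t * ∑ i ∈ s, exp (g i) := by
  rw [mul_sum]
  refine sum_le_sum fun i hi => ?_
  rw [← exp_add, exp_le_exp]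
  linarith [h i hi]

section SinkhornMass

variable {ι κ : Type*} [Fintype ι] [Fintype κ] (C : ι → κ → ℝ) (η : ℝ)

/-- The total mass `x(u,v)` of the matrix `B(u,v)ᵢⱼ = exp ((uᵢ + vⱼ − Cᵢⱼ)/η)`. -/
noncomputable def sinkhornMass (u : ι → ℝ) (v : κ → ℝ) : ℝ :=
  ∑ i, ∑ j, exp ((u i + v j - C i j) / η)

lemma sinkhornMass_nonneg (u : ι → ℝ) (v : κ → ℝ) : 0 ≤ sinkhornMass C η u v := by
  unfold sinkhornMass
  positivity

variable {C η}

lemma sinkhornMass_le_exp_mul {u u' : ι → ℝ} {v v' : κ → ℝ} {δ : ℝ} (hη : 0 < η)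
    (hu : ‖u - u'‖ ≤ δ) (hv : ‖v - v'‖ ≤ δ) :
    sinkhornMass C η u v ≤ exp (2 * δ / η) * sinkhornMass C η u' v' := by
  simp only [sinkhornMass, ← Fintype.sum_prod_type']
  refine sum_exp_le_exp_mul_sum_exp _ fun p _ => ?_
  have hui : u p.1 - u' p.1 ≤ δ :=
    (le_abs_self _).trans ((norm_le_pi_norm (u - u') p.1).trans hu)
  have hvj : v p.2 - v' p.2 ≤ δ :=
    (le_abs_self _).trans ((norm_le_pi_norm (v - v') p.2).trans hv)
  rw [← add_div, div_le_div_iff_of_pos_right hη]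
  linarith

end SinkhornMass

theorem stmt_14_general {n : ℕ}
    (C : Fin n → Fin n → ℝ)
    (η : ℝ) (hη : 0 < η) (u v u' v' : Fin n → ℝ) (Δ : ℝ)
    (hΔ : max ‖u - u'‖ ‖v - v'‖ = Δ) (hΔη : Δ ≤ η / 8) :
    |(∑ i, ∑ j, Real.exp ((u i + v j - C i j) / η))
        - ∑ i, ∑ j, Real.exp ((u' i + v' j - C i j) / η)|
      ≤ (3 / η) * Δ *
        min (∑ i, ∑ j, Real.exp ((u i + v j - C i j) / η))
          (∑ i, ∑ j, Real.exp ((u' i + v' j - C i j) / η)) := by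
  have hu : ‖u - u'‖ ≤ Δ := hΔ ▸ le_max_left _ _
  have hv : ‖v - v'‖ ≤ Δ := hΔ ▸ le_max_right _ _
  have hΔ₀ : 0 ≤ Δ := (norm_nonneg _).trans hu
  have hexp : exp (2 * Δ / η) - 1 ≤ 3 / η * Δ := by
    calc exp (2 * Δ / η) - 1
        ≤ 3 / 2 * (2 * Δ / η) := Real.exp_sub_one_le_three_halves_mul (by positivity)
          (by rw [div_le_iff₀ hη]; linarith)
      _ = 3 / η * Δ := by field_simp
  exact abs_sub_le_mul_min_of_le_mul (sinkhornMass_nonneg C η u v)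
    (sinkhornMass_nonneg C η u' v') (sinkhornMass_le_exp_mul hη hu hv)
    (sinkhornMass_le_exp_mul hη (norm_sub_rev u u' ▸ hu) (norm_sub_rev v v' ▸ hv)) hexp

/-- If `max{‖u − u'‖∞, ‖v − v'‖∞} = Δ ≤ η/8`, then
`|x(u,v) − x(u',v')| ≤ (3/η)·Δ·min{x(u,v), x(u',v')}`,
where `x(u,v) = Σᵢⱼ exp((uᵢ + vⱼ − Cᵢⱼ)/η)`. -/
theorem stmt_14 {n : ℕ} (hn : 2 ≤ n)
    (C : Fin n → Fin n → ℝ) (hC : ∀ i j, 0 ≤ C i j)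
    (η : ℝ) (hη : 0 < η) (u v u' v' : Fin n → ℝ) (Δ : ℝ)
    (hΔ : max ‖u - u'‖ ‖v - v'‖ = Δ) (hΔη : Δ ≤ η / 8) :
    |(∑ i, ∑ j, Real.exp ((u i + v j - C i j) / η))
        - ∑ i, ∑ j, Real.exp ((u' i + v' j - C i j) / η)|
      ≤ (3 / η) * Δ *
        min (∑ i, ∑ j, Real.exp ((u i + v j - C i j) / η))
          (∑ i, ∑ j, Real.exp ((u' i + v' j - C i j) / η)) :=
  stmt_14_general C η hη u v u' v' Δ hΔ hΔη
end

section
/- Let X, X̂ ∈ ℝ^{n×n} have nonnegative entries, with x = Σ_{i,j} Xᵢⱼ and x̂ = Σ_{i,j} X̂ᵢⱼ. If x̂ ≤ (α+β)/2 and x ≤ (α+β)/2 + 1/2 + 1/(4·log n), then H(X) − H(X̂) ≤ ((α+β)/2)·(log((α+β)/2) + 2·log n − 1) + log n + 5/2. -/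
lemma ent_term_le (a t : ℝ) (ha : 0 < a) (ht : 0 ≤ t) :
    t - t * Real.log t ≤ a - t * Real.log a := by
  rcases ht.eq_or_lt with h | h
  · simp [← h]; linarith
  · have h1 : Real.log (a / t) ≤ a / t - 1 := Real.log_le_sub_one_of_pos (by positivity)
    rw [Real.log_div ha.ne' h.ne'] at h1
    have h2 : t * (Real.log a - Real.log t) ≤ t * (a / t - 1) :=
      mul_le_mul_of_nonneg_left h1 h.le
    have h3 : t * (a / t - 1) = a - t := by field_simp
    nlinarith

/-- If `x̂ ≤ (α+β)/2` and `x ≤ (α+β)/2 + 1/2 + 1/(4·log n)`, then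
`H(X) − H(X̂) ≤ ((α+β)/2)·(log((α+β)/2) + 2·log n − 1) + log n + 5/2`. -/
theorem stmt_17 {n : ℕ} (hn : 2 ≤ n) (α β : ℝ) (hα : 0 < α) (hβ : 0 < β)
    (X Xhat : Fin n → Fin n → ℝ)
    (hX : ∀ i j, 0 ≤ X i j) (hXhat : ∀ i j, 0 ≤ Xhat i j)
    (hxhat : (∑ i, ∑ j, Xhat i j) ≤ (α + β) / 2)
    (hx : (∑ i, ∑ j, X i j) ≤ (α + β) / 2 + 1 / 2 + 1 / (4 * Real.log n)) :
    entH X - entH Xhat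
      ≤ ((α + β) / 2) * (Real.log ((α + β) / 2) + 2 * Real.log n - 1)
        + Real.log n + 5 / 2 := by
  set m : ℝ := (α + β) / 2 with hm_def
  have hm : 0 < m := by positivity
  have hn1 : (1 : ℝ) < (n : ℝ) := by
    have : (2 : ℝ) ≤ (n : ℝ) := by exact_mod_cast hn
    linarith
  have hnpos : (0 : ℝ) < (n : ℝ) := by linarith
  set L : ℝ := Real.log n with hL_def
  have hL : 0 < L := Real.log_pos hn1
  set s : ℝ := ∑ i, ∑ j, Xhat i j with hs_def
  set x : ℝ := ∑ i, ∑ j, X i j with hx_def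
  have hs0 : 0 ≤ s := Finset.sum_nonneg fun i _ => Finset.sum_nonneg fun j _ => hXhat i j
  have hx0 : 0 ≤ x := Finset.sum_nonneg fun i _ => Finset.sum_nonneg fun j _ => hX i j
  -- Upper bound on entH X
  have hHX : entH X ≤ 1 + 2 * L * x := by
    have ha : (0 : ℝ) < ((n : ℝ) * n)⁻¹ := by positivity
    have hlog_a : Real.log (((n : ℝ) * n)⁻¹) = -(2 * L) := by
      rw [Real.log_inv, Real.log_mul hnpos.ne' hnpos.ne']; ring
    have key : ∀ i j, X i j - X i j * Real.log (X i j)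
        ≤ ((n : ℝ) * n)⁻¹ + X i j * (2 * L) := by
      intro i j
      have := ent_term_le (((n : ℝ) * n)⁻¹) (X i j) ha (hX i j)
      rw [hlog_a] at this
      linarith
    have hent : entH X = ∑ i, ∑ j, (X i j - X i j * Real.log (X i j)) := by
      have e1 : ∀ i : Fin n, ∑ j, (X i j - X i j * Real.log (X i j))
          = -∑ j, X i j * (Real.log (X i j) - 1) := by
        intro i
        rw [← Finset.sum_neg_distrib]
        congr 1 with j; ring
      simp [entH, e1]
    rw [hent]
    have hb : ∑ i, ∑ j, (X i j - X i j * Real.log (X i j))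
        ≤ ∑ i : Fin n, ∑ j : Fin n, (((n : ℝ) * n)⁻¹ + X i j * (2 * L)) :=
      Finset.sum_le_sum fun i _ => Finset.sum_le_sum fun j _ => key i j
    have hc : ∑ i : Fin n, ∑ j : Fin n, (((n : ℝ) * n)⁻¹ + X i j * (2 * L))
        = 1 + 2 * L * x := by
      have e1 : ∀ i : Fin n, ∑ j : Fin n, (((n : ℝ) * n)⁻¹ + X i j * (2 * L))
          = (n : ℝ) * ((n : ℝ) * n)⁻¹ + (∑ j, X i j) * (2 * L) := by
        intro i
        rw [Finset.sum_add_distrib, Finset.sum_const, ← Finset.sum_mul]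
        simp [mul_comm]
      rw [Finset.sum_congr rfl fun i _ => e1 i, Finset.sum_add_distrib,
        Finset.sum_const, ← Finset.sum_mul, ← hx_def]
      simp only [Finset.card_univ, Fintype.card_fin, nsmul_eq_mul]
      have hnn : (n : ℝ) * ((n : ℝ) * (((n : ℝ) * n)⁻¹)) = 1 := by
        field_simp
      rw [← mul_assoc, mul_assoc (n:ℝ)]
      rw [hnn]
      ring
    linarith
  -- Lower bound on entH Xhat
  have hHXhat : -entH Xhat ≤ s * (Real.log m - 1) := by
    have key : ∀ i j, Xhat i j * Real.log (Xhat i j) ≤ Xhat i j * Real.log m := by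
      intro i j
      rcases (hXhat i j).eq_or_lt with h | h
      · simp [← h]
      · have h1 : Xhat i j ≤ ∑ j, Xhat i j :=
          Finset.single_le_sum (fun k _ => hXhat i k) (Finset.mem_univ j)
        have h2 : (∑ j, Xhat i j) ≤ s :=
          Finset.single_le_sum (fun k (_ : k ∈ Finset.univ) =>
            Finset.sum_nonneg fun l _ => hXhat k l) (Finset.mem_univ i)
        have h3 : Xhat i j ≤ m := le_trans (le_trans h1 h2) hxhat
        exact mul_le_mul_of_nonneg_left (Real.log_le_log h (by linarith)) (hXhat i j)
    have h4 : -entH Xhat = ∑ i, ∑ j, (Xhat i j * Real.log (Xhat i j) - Xhat i j) := by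
      simp [entH, mul_sub]
    rw [h4]
    have h5 : ∑ i, ∑ j, (Xhat i j * Real.log (Xhat i j) - Xhat i j)
        ≤ ∑ i : Fin n, ∑ j : Fin n, (Xhat i j * Real.log m - Xhat i j) :=
      Finset.sum_le_sum fun i _ => Finset.sum_le_sum fun j _ => by
        have := key i j; linarith
    have h6 : ∑ i : Fin n, ∑ j : Fin n, (Xhat i j * Real.log m - Xhat i j)
        = s * (Real.log m - 1) := by
      have e1 : ∀ i : Fin n, ∑ j : Fin n, (Xhat i j * Real.log m - Xhat i j)
          = (∑ j, Xhat i j) * Real.log m - ∑ j, Xhat i j := by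
        intro i; rw [Finset.sum_sub_distrib, ← Finset.sum_mul]
      rw [Finset.sum_congr rfl fun i _ => e1 i, Finset.sum_sub_distrib,
        ← Finset.sum_mul, ← hs_def]
      ring
    linarith
  have hsm : s ≤ m := hxhat
  -- key elementary bound
  have hcase : s * (Real.log m - 1) ≤ m * Real.log m - m + 1 := by
    rcases le_or_gt 1 (Real.log m) with h | h
    · have : s * (Real.log m - 1) ≤ m * (Real.log m - 1) :=
        mul_le_mul_of_nonneg_right hsm (by linarith)
      nlinarith
    · have h1 : s * (Real.log m - 1) ≤ 0 := mul_nonpos_of_nonneg_of_nonpos hs0 (by linarith)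
      have h2 : Real.log (1 / m) ≤ 1 / m - 1 := Real.log_le_sub_one_of_pos (by positivity)
      rw [Real.log_div one_ne_zero hm.ne', Real.log_one] at h2
      have h3 : m * (1 / m) = 1 := by field_simp
      nlinarith
  -- final arithmetic
  have hxL : 2 * L * x ≤ 2 * L * m + L + 1 / 2 := by
    have h1 : 2 * L * x ≤ 2 * L * (m + 1 / 2 + 1 / (4 * L)) :=
      mul_le_mul_of_nonneg_left hx (by positivity)
    have h2 : 2 * L * (m + 1 / 2 + 1 / (4 * L)) = 2 * L * m + L + 1 / 2 := by
      field_simp; ring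
    linarith
  calc entH X - entH Xhat ≤ (1 + 2 * L * x) + s * (Real.log m - 1) := by linarith
    _ ≤ m * (Real.log m + 2 * L - 1) + L + 5 / 2 := by nlinarith
end
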